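/- arXiv:1702.05582 — 2 statements merged into one kernel-verified Lean document; each statement's English description precedes it below -/
import Mathlib

section
/- For complex numbers α and β with Re(α) > 0 and Re(β) > 0, and for every complex number z, the two-parameter Mittag-Leffler series ∑_{n=0}^∞ z^n · (Γ(αn + β))⁻¹ is summable, where (Γ(·))⁻¹ denotes the reciprocal of the complex Gamma function. -/
/-! By the ratio test it suffices that `‖Γ(s)‖ / ‖Γ(s + α)‖ → 0` along `s = αn + β`.
The Beta integral gives `Γ(s) Γ(α) = Γ(s + α) B(s, α)` with `‖B(s, α)‖ ≤ B(Re s, Re α)`, so the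
ratio is controlled by the real ratio `Γ(Re s) / Γ(Re s + Re α)`, which log-convexity of the real
Gamma function bounds by `(Re s - 1) ^ (-Re α)`. -/

open Filter Topology

namespace Real

lemma rpow_mul_Gamma_le_Gamma_add {x a : ℝ} (hx : 1 < x) (ha : 0 < a) :
    (x - 1) ^ a * Gamma x ≤ Gamma (x + a) := by
  have hx₁ : 0 < x - 1 := sub_pos.2 hx
  have hΓ₁ : 0 < Gamma (x - 1) := Gamma_pos_of_pos hx₁
  have hΓ : Gamma x = (x - 1) * Gamma (x - 1) := by
    simpa using Gamma_add_one (sub_ne_zero.2 hx.ne')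
  have hslope := convexOn_log_Gamma.slope_mono_adjacent (x := x - 1) (y := x) (z := x + a)
    hx₁ (Set.mem_Ioi.2 (by linarith)) (by linarith) (by linarith)
  simp only [Function.comp, sub_sub_cancel, div_one, add_sub_cancel_left, hΓ] at hslope
  rw [log_mul hx₁.ne' hΓ₁.ne', add_sub_cancel_right, le_div_iff₀ ha] at hslope
  rw [← log_le_log_iff (by positivity) (Gamma_pos_of_pos (by linarith)),
    log_mul (by positivity) (Gamma_pos_of_pos (by linarith)).ne', log_rpow hx₁, hΓ,
    log_mul hx₁.ne' hΓ₁.ne']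
  linarith

end Real

namespace Complex

lemma norm_ofReal_cpow_le_norm_ofReal_cpow_re {t : ℝ} (ht : 0 ≤ t) (w : ℂ) :
    ‖(t : ℂ) ^ w‖ ≤ ‖(t : ℂ) ^ (w.re : ℂ)‖ := by
  rcases ht.lt_or_eq with ht | rfl
  · rw [norm_cpow_eq_rpow_re_of_pos ht, norm_cpow_eq_rpow_re_of_pos ht, ofReal_re]
  · rcases eq_or_ne w 0 with rfl | hw
    · simp
    · simpa [zero_cpow hw] using Real.rpow_nonneg le_rfl w.re

lemma norm_betaIntegral_le {u v : ℂ} (hu : 0 < u.re) (hv : 0 < v.re) :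
    ‖betaIntegral u v‖ ≤ ‖betaIntegral u.re v.re‖ := by
  set g : ℝ → ℂ := fun t ↦ (t : ℂ) ^ ((u.re : ℂ) - 1) * (1 - (t : ℂ)) ^ ((v.re : ℂ) - 1)
  have hg_real : Set.EqOn g (fun t ↦ (‖g t‖ : ℂ)) (Set.uIcc 0 1) := by
    intro t ht
    rw [Set.uIcc_of_le zero_le_one] at ht
    have ht' : 0 ≤ 1 - t := sub_nonneg.2 ht.2
    have h : g t = ((t ^ (u.re - 1) * (1 - t) ^ (v.re - 1) : ℝ) : ℂ) := by
      push_cast [ofReal_cpow ht.1, ofReal_cpow ht']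
      rfl
    change g t = (‖g t‖ : ℂ)
    rw [h, norm_real, Real.norm_of_nonneg
      (mul_nonneg (Real.rpow_nonneg ht.1 _) (Real.rpow_nonneg ht' _))]
  calc ‖betaIntegral u v‖
      ≤ ∫ t in (0 : ℝ)..1, ‖(t : ℂ) ^ (u - 1) * (1 - (t : ℂ)) ^ (v - 1)‖ :=
        intervalIntegral.norm_integral_le_integral_norm zero_le_one
    _ ≤ ∫ t in (0 : ℝ)..1, ‖g t‖ := by
        refine intervalIntegral.integral_mono_on zero_le_one (betaIntegral_convergent hu hv).norm
          (betaIntegral_convergent (by simpa) (by simpa)).norm fun t ht ↦ ?_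
        have h₁ := norm_ofReal_cpow_le_norm_ofReal_cpow_re ht.1 (u - 1)
        have h₂ := norm_ofReal_cpow_le_norm_ofReal_cpow_re (sub_nonneg.2 ht.2) (v - 1)
        simp only [sub_re, one_re, ofReal_sub, ofReal_one] at h₁ h₂
        rw [norm_mul, norm_mul]
        gcongr
    _ = ‖betaIntegral u.re v.re‖ := by
        rw [betaIntegral, intervalIntegral.integral_congr hg_real, intervalIntegral.integral_ofReal,
          norm_real, Real.norm_of_nonneg (intervalIntegral.integral_nonneg zero_le_one
            fun t _ ↦ norm_nonneg _)]

lemma norm_Gamma_mul_norm_Gamma_le {u v : ℂ} (hu : 0 < u.re) (hv : 0 < v.re) :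
    ‖Gamma u‖ * ‖Gamma v‖ ≤
      ‖Gamma (u + v)‖ * (Real.Gamma u.re * Real.Gamma v.re / Real.Gamma (u.re + v.re)) := by
  rw [← norm_mul, Gamma_mul_Gamma_eq_betaIntegral hu hv, norm_mul]
  gcongr
  refine (norm_betaIntegral_le hu hv).trans_eq ?_
  rw [betaIntegral_eq_Gamma_mul_div _ _ (by simpa) (by simpa), ← ofReal_add, Gamma_ofReal,
    Gamma_ofReal, Gamma_ofReal, ← ofReal_mul, ← ofReal_div, norm_real, Real.norm_of_nonneg]
  exact (div_pos (mul_pos (Real.Gamma_pos_of_pos hu) (Real.Gamma_pos_of_pos hv))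
    (Real.Gamma_pos_of_pos (add_pos hu hv))).le

lemma norm_inv_Gamma_add_le {s u : ℂ} (hs : 1 < s.re) (hu : 0 < u.re) :
    ‖(Gamma (s + u))⁻¹‖ ≤ Real.Gamma u.re / ‖Gamma u‖ * (s.re - 1) ^ (-u.re) * ‖(Gamma s)⁻¹‖ := by
  have hΓs : 0 < ‖Gamma s‖ := norm_pos_iff.2 (Gamma_ne_zero_of_re_pos (by linarith))
  have hΓu : 0 < ‖Gamma u‖ := norm_pos_iff.2 (Gamma_ne_zero_of_re_pos hu)
  have hΓsu : 0 < ‖Gamma (s + u)‖ :=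
    norm_pos_iff.2 (Gamma_ne_zero_of_re_pos (by rw [add_re]; linarith))
  have hx₁ : 0 < s.re - 1 := sub_pos.2 hs
  have hΓx : Real.Gamma s.re ≤ (s.re - 1) ^ (-u.re) * Real.Gamma (s.re + u.re) := by
    rw [Real.rpow_neg hx₁.le, inv_mul_eq_div, le_div_iff₀ (by positivity), mul_comm]
    exact Real.rpow_mul_Gamma_le_Gamma_add hs hu
  have hΓ : ‖Gamma s‖ * ‖Gamma u‖ ≤ ‖Gamma (s + u)‖ * (Real.Gamma u.re * (s.re - 1) ^ (-u.re)) := by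
    refine (norm_Gamma_mul_norm_Gamma_le (by linarith) hu).trans ?_
    gcongr
    rw [div_le_iff₀ (Real.Gamma_pos_of_pos (by linarith))]
    calc Real.Gamma s.re * Real.Gamma u.re
        ≤ (s.re - 1) ^ (-u.re) * Real.Gamma (s.re + u.re) * Real.Gamma u.re := by gcongr
      _ = _ := by ring
  rw [norm_inv, norm_inv]
  calc ‖Gamma (s + u)‖⁻¹ = ‖Gamma s‖ * ‖Gamma u‖ / (‖Gamma (s + u)‖ * ‖Gamma u‖ * ‖Gamma s‖) := by
        field_simp
    _ ≤ ‖Gamma (s + u)‖ * (Real.Gamma u.re * (s.re - 1) ^ (-u.re)) /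
          (‖Gamma (s + u)‖ * ‖Gamma u‖ * ‖Gamma s‖) := by gcongr
    _ = _ := by field_simp

end Complex

theorem mittagLeffler_two_param_summable_general (α β : ℂ) (hα : 0 < α.re) (z : ℂ) :
    Summable (fun n : ℕ => z ^ n * (Complex.Gamma (α * n + β))⁻¹) := by
  set C := ‖z‖ * (Real.Gamma α.re / ‖Complex.Gamma α‖)
  have hre : Tendsto (fun n : ℕ ↦ (α * n + β).re - 1) atTop atTop := by
    have h (n : ℕ) : (α * n + β).re - 1 = α.re * n + (β.re - 1) := by
      simp only [Complex.add_re, Complex.mul_re, Complex.natCast_re,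
        Complex.natCast_im, mul_zero, sub_zero]
      ring
    simpa only [h] using tendsto_atTop_add_const_right _ _
      (tendsto_natCast_atTop_atTop.const_mul_atTop hα)
  have hsmall : ∀ᶠ n : ℕ in atTop, C * ((α * n + β).re - 1) ^ (-α.re) ≤ 1 / 2 := by
    refine Tendsto.eventually_le_const (by norm_num : (0 : ℝ) < 1 / 2) ?_
    simpa using ((tendsto_rpow_neg_atTop hα).comp hre).const_mul C
  refine summable_of_ratio_norm_eventually_le (r := 1 / 2) (by norm_num) ?_
  filter_upwards [hre.eventually_gt_atTop 0, hsmall] with n hn hCn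
  have hshift : α * ↑(n + 1) + β = (α * n + β) + α := by push_cast; ring
  calc ‖z ^ (n + 1) * (Complex.Gamma (α * ↑(n + 1) + β))⁻¹‖
      = ‖z‖ * ‖z ^ n‖ * ‖(Complex.Gamma ((α * n + β) + α))⁻¹‖ := by
        rw [hshift, norm_mul, norm_pow, norm_pow, pow_succ']
    _ ≤ ‖z‖ * ‖z ^ n‖ * (Real.Gamma α.re / ‖Complex.Gamma α‖ * ((α * n + β).re - 1) ^ (-α.re) *
          ‖(Complex.Gamma (α * n + β))⁻¹‖) := by
        gcongr
        exact Complex.norm_inv_Gamma_add_le (by linarith) hα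
    _ = C * ((α * n + β).re - 1) ^ (-α.re) * ‖z ^ n * (Complex.Gamma (α * n + β))⁻¹‖ := by
        rw [norm_mul]; ring
    _ ≤ 1 / 2 * ‖z ^ n * (Complex.Gamma (α * n + β))⁻¹‖ := by gcongr

/-- For complex α, β with Re(α) > 0, Re(β) > 0, and every complex z,
the two-parameter Mittag-Leffler series ∑_{n=0}^∞ z^n · (Γ(αn + β))⁻¹ is summable. -/
theorem mittagLeffler_two_param_summable (α β : ℂ) (hα : 0 < α.re) (hβ : 0 < β.re) (z : ℂ) :
    Summable (fun n : ℕ => z ^ n * (Complex.Gamma (α * n + β))⁻¹) :=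
  mittagLeffler_two_param_summable_general α β hα z
end

section
/- For every real number α with 0 < α ≤ 1 and every real number x, the Mittag-Leffler function value is strictly positive: E_α(x) > 0. -/
/-!
For `x ≥ 0` all terms of the series are nonnegative and the constant term is `1`. For `x < 0`
write `x = -t ^ α`. Integrating the series termwise against the Beta integral shows that
`u t = E_α(-t ^ α)` solves the Volterra equation `u = 1 - I^α u`, where `I^α` is the
Riemann–Liouville integral. Let `t₀` be the first point with `u t₀ ≤ 0` and let `u r` be the
maximum of `u` on `[t₀ - δ, t₀]`. Since the kernel `(t - s) ^ (α - 1)` is nonincreasing in `t` when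
`α ≤ 1`, comparing the equation at `r` and at `t₀` gives `u r ≤ u r * δ ^ α / Γ(α + 1)`, which is
impossible for small `δ`. Convergence of the series comes from `y ^ x * e^(-y) ≤ Γ(x + 1)`.
-/

/-- The Mittag-Leffler function E_α(x) = ∑_{k=0}^∞ x^k / Γ(αk + 1). -/
noncomputable def mittagLeffler (α x : ℝ) : ℝ :=
  ∑' k : ℕ, x ^ k / Real.Gamma (α * k + 1)

open Real Set Filter Topology MeasureTheory intervalIntegral

lemma rpow_mul_exp_neg_le_Gamma_add_one {x y : ℝ} (hx : 0 ≤ x) (hy : 0 ≤ y) :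
    y ^ x * exp (-y) ≤ Gamma (x + 1) := by
  have hint : IntegrableOn (fun t => exp (-t) * t ^ x) (Ioi 0) := by
    simpa using GammaIntegral_convergent (s := x + 1) (by linarith)
  rw [Gamma_eq_integral (by linarith), add_sub_cancel_right, ← integral_exp_neg_Ioi,
    ← MeasureTheory.integral_const_mul]
  calc ∫ t in Ioi y, y ^ x * exp (-t)
      ≤ ∫ t in Ioi y, exp (-t) * t ^ x := by
        refine setIntegral_mono_on ((integrableOn_exp_neg_Ioi y).const_mul _)
          (hint.mono_set (Ioi_subset_Ioi hy)) measurableSet_Ioi fun t ht => ?_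
        rw [mul_comm]
        gcongr
        exact ht.le
    _ ≤ ∫ t in Ioi 0, exp (-t) * t ^ x :=
        setIntegral_mono_set hint
          ((ae_restrict_iff' measurableSet_Ioi).2 (.of_forall fun t (ht : 0 < t) =>
            mul_nonneg (exp_pos _).le (rpow_nonneg ht.le _)))
          (Ioi_subset_Ioi hy).eventuallyLE

lemma summable_pow_div_Gamma {α : ℝ} (hα : 0 < α) (x : ℝ) :
    Summable fun k : ℕ => x ^ k / Gamma (α * k + 1) := by
  set y := (2 * |x|) ^ α⁻¹
  have hy : y ^ α = 2 * |x| := rpow_inv_rpow (by positivity) hα.ne'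
  refine Summable.of_norm_bounded (summable_geometric_two.mul_left (exp y)) fun k => ?_
  have hΓ : 0 < Gamma (α * k + 1) := Gamma_pos_of_pos (by positivity)
  have hΓy := rpow_mul_exp_neg_le_Gamma_add_one (by positivity : 0 ≤ α * k) (by positivity : 0 ≤ y)
  rw [norm_div, norm_pow, norm_of_nonneg hΓ.le, div_le_iff₀ hΓ, Real.norm_eq_abs]
  calc |x| ^ k = (1 / 2) ^ k * (y ^ (α * k) * exp (-y)) * exp y := by
        rw [mul_assoc, mul_assoc, ← exp_add, neg_add_cancel, exp_zero, mul_one,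
          rpow_mul (by positivity), hy, rpow_natCast, ← mul_pow]
        ring_nf
    _ ≤ (1 / 2) ^ k * Gamma (α * k + 1) * exp y := by gcongr
    _ = _ := by ring

lemma hasSum_mittagLeffler {α : ℝ} (hα : 0 < α) (x : ℝ) :
    HasSum (fun k : ℕ => x ^ k / Gamma (α * k + 1)) (mittagLeffler α x) :=
  (summable_pow_div_Gamma hα x).hasSum

lemma mittagLeffler_zero (α : ℝ) : mittagLeffler α 0 = 1 := by
  rw [mittagLeffler, tsum_eq_single 0 fun k hk => by simp [hk]]
  simp

lemma continuous_mittagLeffler {α : ℝ} (hα : 0 < α) : Continuous (mittagLeffler α) := by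
  refine continuous_iff_continuousAt.2 fun x => ?_
  set R := |x| + 1
  have hR : Icc (-R) R ∈ 𝓝 x :=
    Icc_mem_nhds (by linarith [neg_abs_le x]) (by linarith [le_abs_self x])
  refine (continuousOn_tsum (fun k => by fun_prop) (summable_pow_div_Gamma hα R)
    fun k y hy => ?_).continuousAt hR
  rw [norm_div, norm_pow, Real.norm_eq_abs, Real.norm_eq_abs,
    abs_of_pos (Gamma_pos_of_pos (by positivity))]
  gcongr
  exact abs_le.2 hy

noncomputable def riemannLiouville (α : ℝ) (f : ℝ → ℝ) (t : ℝ) : ℝ :=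
  (Gamma α)⁻¹ * ∫ s in 0..t, (t - s) ^ (α - 1) * f s

lemma integral_sub_rpow_mul_rpow {a b t : ℝ} (ha : 0 < a) (hb : 0 < b) (ht : 0 < t) :
    ∫ s in 0..t, (t - s) ^ (a - 1) * s ^ (b - 1) =
      Gamma a * Gamma b / Gamma (a + b) * t ^ (a + b - 1) := by
  have hΓ : Complex.Gamma (b + a) ≠ 0 := by
    rw [← Complex.ofReal_add, Complex.Gamma_ofReal]
    exact_mod_cast (Gamma_pos_of_pos (by linarith)).ne'
  have hβ :
      Complex.betaIntegral b a = Complex.Gamma b * Complex.Gamma a / Complex.Gamma (b + a) := by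
    rw [Complex.Gamma_mul_Gamma_eq_betaIntegral (by simpa using hb) (by simpa using ha),
      mul_div_cancel_left₀ _ hΓ]
  apply Complex.ofReal_injective
  calc ((∫ s in 0..t, (t - s) ^ (a - 1) * s ^ (b - 1) : ℝ) : ℂ)
      = ∫ s in 0..t, (s : ℂ) ^ ((b : ℂ) - 1) * ((t : ℂ) - s) ^ ((a : ℂ) - 1) := by
        rw [← intervalIntegral.integral_ofReal]
        refine integral_congr fun s hs => ?_
        rw [uIcc_of_le ht.le] at hs
        push_cast
        rw [Complex.ofReal_cpow (by linarith [hs.2]), Complex.ofReal_cpow hs.1]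
        push_cast
        ring
    _ = (t : ℂ) ^ ((b : ℂ) + a - 1) * Complex.betaIntegral b a := Complex.betaIntegral_scaled _ _ ht
    _ = _ := by
        rw [hβ, ← Complex.ofReal_add, Complex.Gamma_ofReal, Complex.Gamma_ofReal,
          Complex.Gamma_ofReal]
        push_cast [Complex.ofReal_cpow ht.le]
        ring_nf

lemma riemannLiouville_rpow_div_Gamma {α β t : ℝ} (hα : 0 < α) (hβ : -1 < β) (ht : 0 < t) :
    riemannLiouville α (fun s => s ^ β / Gamma (β + 1)) t = t ^ (α + β) / Gamma (α + β + 1) := by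
  have hΓβ : Gamma (β + 1) ≠ 0 := (Gamma_pos_of_pos (by linarith)).ne'
  simp_rw [riemannLiouville, mul_div_assoc', intervalIntegral.integral_div]
  have hB := integral_sub_rpow_mul_rpow hα (by linarith : 0 < β + 1) ht
  rw [add_sub_cancel_right] at hB
  rw [hB, ← add_assoc, add_sub_cancel_right]
  field_simp

lemma intervalIntegrable_rpow_sub_mul {α t a b : ℝ} (hα : 0 < α) {g : ℝ → ℝ}
    (hg : ContinuousOn g (uIcc a b)) :
    IntervalIntegrable (fun s => (t - s) ^ (α - 1) * g s) volume a b := by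
  have hker := (intervalIntegrable_rpow' (a := t - a) (b := t - b)
    (by linarith : -1 < α - 1)).comp_sub_left t
  simp only [sub_sub_cancel] at hker
  exact hker.mul_continuousOn hg

lemma continuousOn_mittagLeffler_neg_rpow {α : ℝ} (hα : 0 < α) :
    ContinuousOn (fun s => mittagLeffler α (-s ^ α)) (Ici 0) :=
  (continuous_mittagLeffler hα).comp_continuousOn
    (continuousOn_id.rpow_const fun _ _ => Or.inr hα.le).neg

lemma riemannLiouville_neg_rpow_pow_div_Gamma {α t : ℝ} (hα : 0 < α) (ht : 0 < t) (k : ℕ) :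
    riemannLiouville α (fun s => (-s ^ α) ^ k / Gamma (α * k + 1)) t =
      -((-t ^ α) ^ (k + 1) / Gamma (α * ↑(k + 1) + 1)) := by
  have hpow : ∀ s : ℝ, 0 ≤ s → (-s ^ α) ^ k = (-1) ^ k * s ^ (α * k) := fun s hs => by
    rw [neg_pow, rpow_mul_natCast hs]
  have hI := riemannLiouville_rpow_div_Gamma hα (β := α * k)
    (by linarith [show 0 ≤ α * k by positivity]) ht
  rw [riemannLiouville] at hI ⊢
  rw [integral_congr (g := fun s => (-1) ^ k * ((t - s) ^ (α - 1) * (s ^ (α * k) /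
      Gamma (α * k + 1)))) fun s hs => ?_, intervalIntegral.integral_const_mul, mul_left_comm, hI,
    pow_succ, hpow t ht.le, rpow_add ht]
  · push_cast
    ring_nf
  · rw [uIcc_of_le ht.le] at hs
    simp only [hpow s hs.1]
    ring

lemma hasSum_riemannLiouville_mittagLeffler_neg_rpow {α t : ℝ} (hα : 0 < α) (ht : 0 < t) :
    HasSum (fun k : ℕ => -((-t ^ α) ^ (k + 1) / Gamma (α * ↑(k + 1) + 1)))
      (riemannLiouville α (fun s => mittagLeffler α (-s ^ α)) t) := by
  have hΓ : ∀ k : ℕ, 0 < Gamma (α * k + 1) := fun k => Gamma_pos_of_pos (by positivity)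
  simp_rw [← riemannLiouville_neg_rpow_pow_div_Gamma hα ht, riemannLiouville]
  refine HasSum.mul_left _ <| hasSum_integral_of_dominated_convergence
    (fun k s => (t - s) ^ (α - 1) * ((t ^ α) ^ k / Gamma (α * k + 1))) (fun k => ?_)
    (fun k => .of_forall fun s hs => ?_) (.of_forall fun s _ => ?_) ?_
    (.of_forall fun s _ => (hasSum_mittagLeffler hα _).mul_left _)
  · have hcont : ContinuousOn (fun s : ℝ => (-s ^ α) ^ k / Gamma (α * k + 1)) (Ici 0) :=
      ((continuousOn_id.rpow_const fun _ _ => Or.inr hα.le).neg.pow k).div_const _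
    refine (intervalIntegrable_rpow_sub_mul hα (hcont.mono ?_)).def'.aestronglyMeasurable
    rw [uIcc_of_le ht.le]
    exact Icc_subset_Ici_self
  · rw [uIoc_of_le ht.le] at hs
    rw [norm_mul, norm_div, norm_pow, norm_neg, norm_of_nonneg (hΓ k).le,
      norm_of_nonneg (rpow_nonneg (sub_nonneg.2 hs.2) _), norm_of_nonneg (rpow_nonneg hs.1.le _)]
    exact mul_le_mul_of_nonneg_left (div_le_div_of_nonneg_right (pow_le_pow_left₀
      (rpow_nonneg hs.1.le _) (rpow_le_rpow hs.1.le hs.2 hα.le) k) (hΓ k).le)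
      (rpow_nonneg (sub_nonneg.2 hs.2) _)
  · exact (summable_pow_div_Gamma hα _).mul_left _
  · simp_rw [tsum_mul_left]
    exact intervalIntegrable_rpow_sub_mul hα continuousOn_const

lemma mittagLeffler_neg_rpow_eq_one_sub_riemannLiouville {α t : ℝ} (hα : 0 < α) (ht : 0 ≤ t) :
    mittagLeffler α (-t ^ α) =
      1 - riemannLiouville α (fun s => mittagLeffler α (-s ^ α)) t := by
  rcases ht.eq_or_lt with rfl | ht
  · simp [riemannLiouville, zero_rpow hα.ne', mittagLeffler_zero]
  have hshift := (hasSum_nat_add_iff' 1).2 (hasSum_mittagLeffler hα (-t ^ α))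
  have h := hshift.neg.unique (hasSum_riemannLiouville_mittagLeffler_neg_rpow hα ht)
  simp only [Finset.range_one, Finset.sum_singleton, pow_zero, CharP.cast_eq_zero, mul_zero,
    zero_add, Gamma_one, div_one, neg_sub] at h
  linarith

lemma exists_first_nonpos {u : ℝ → ℝ} (hu : ContinuousOn u (Ici 0)) (h0 : 0 < u 0) {t : ℝ}
    (ht : 0 ≤ t) (hut : u t ≤ 0) : ∃ t₀, 0 < t₀ ∧ u t₀ ≤ 0 ∧ ∀ s ∈ Ico 0 t₀, 0 < u s := by
  set Z := Icc 0 t ∩ u ⁻¹' Iic 0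
  have hZ : IsCompact Z := isCompact_Icc.of_isClosed_subset
    ((hu.mono Icc_subset_Ici_self).preimage_isClosed_of_isClosed isClosed_Icc isClosed_Iic)
    inter_subset_left
  have hmem : sInf Z ∈ Z := hZ.sInf_mem ⟨t, ⟨ht, le_rfl⟩, hut⟩
  refine ⟨sInf Z, lt_of_le_of_ne hmem.1.1 fun h => ?_, hmem.2, fun s hs => ?_⟩
  · exact (h0.trans_le (h ▸ hmem.2)).false
  · by_contra! hle
    exact (csInf_le hZ.bddBelow ⟨⟨hs.1, hs.2.le.trans hmem.1.2⟩, hle⟩).not_gt hs.2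

lemma integral_rpow_sub {α r t : ℝ} (hα : 0 < α) :
    ∫ s in r..t, (t - s) ^ (α - 1) = (t - r) ^ α / α := by
  rw [integral_comp_sub_left (fun x => x ^ (α - 1)), sub_self, integral_rpow (Or.inl (by linarith)),
    sub_add_cancel, zero_rpow hα.ne', sub_zero]

lemma riemannLiouville_le_add {α r t M : ℝ} {u : ℝ → ℝ} (hα0 : 0 < α) (hα1 : α ≤ 1)
    (hr : 0 ≤ r) (hrt : r ≤ t) (hu : ContinuousOn u (Icc 0 t))
    (hnonneg : ∀ s ∈ Icc 0 r, 0 ≤ u s) (hM : ∀ s ∈ Icc r t, u s ≤ M) :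
    riemannLiouville α u t ≤ riemannLiouville α u r + M * (t - r) ^ α / Gamma (α + 1) := by
  have hint : ∀ {a b c : ℝ}, 0 ≤ a → a ≤ b → b ≤ t →
      IntervalIntegrable (fun s => (c - s) ^ (α - 1) * u s) volume a b := fun ha hab hb =>
    intervalIntegrable_rpow_sub_mul hα0
      (hu.mono (by rw [uIcc_of_le hab]; exact Icc_subset_Icc ha hb))
  have h₁ : ∫ s in 0..r, (t - s) ^ (α - 1) * u s ≤ ∫ s in 0..r, (r - s) ^ (α - 1) * u s :=
    integral_mono_on_of_le_Ioo hr (hint le_rfl hr hrt) (hint le_rfl hr hrt) fun s hs =>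
      mul_le_mul_of_nonneg_right
        (rpow_le_rpow_of_nonpos (by linarith [hs.2]) (by linarith) (by linarith))
        (hnonneg s (Ioo_subset_Icc_self hs))
  have h₂ : ∫ s in r..t, (t - s) ^ (α - 1) * u s ≤ M * ((t - r) ^ α / α) := by
    rw [← integral_rpow_sub hα0, mul_comm M, ← intervalIntegral.integral_mul_const]
    refine integral_mono_on hrt (hint hr hrt le_rfl)
      (intervalIntegrable_rpow_sub_mul hα0 continuousOn_const) fun s hs => ?_
    exact mul_le_mul_of_nonneg_left (hM s hs) (rpow_nonneg (by linarith [hs.2]) _)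
  rw [riemannLiouville, riemannLiouville,
    ← integral_add_adjacent_intervals (hint le_rfl hr hrt) (hint hr hrt le_rfl),
    Gamma_add_one hα0.ne']
  calc (Gamma α)⁻¹ * ((∫ s in 0..r, (t - s) ^ (α - 1) * u s) + ∫ s in r..t, (t - s) ^ (α - 1) * u s)
      ≤ (Gamma α)⁻¹ * ((∫ s in 0..r, (r - s) ^ (α - 1) * u s) + M * ((t - r) ^ α / α)) := by
        gcongr
    _ = _ := by field_simp

theorem pos_of_eq_one_sub_riemannLiouville {α : ℝ} {u : ℝ → ℝ} (hα0 : 0 < α) (hα1 : α ≤ 1)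
    (hu : ContinuousOn u (Ici 0)) (heq : ∀ t, 0 ≤ t → u t = 1 - riemannLiouville α u t)
    {t : ℝ} (ht : 0 ≤ t) : 0 < u t := by
  by_contra! hut
  have hu0 : u 0 = 1 := by simpa [riemannLiouville] using heq 0 le_rfl
  obtain ⟨t₀, ht₀, hut₀, hpos⟩ := exists_first_nonpos hu (by rw [hu0]; exact one_pos) ht hut
  have hΓ : 0 < Gamma (α + 1) := Gamma_pos_of_pos (by linarith)
  obtain ⟨δ, ⟨hδt₀, hδ⟩, hδ0⟩ : ∃ δ, (δ < t₀ ∧ δ ^ α < Gamma (α + 1)) ∧ 0 < δ := by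
    have hlim : Tendsto (fun δ : ℝ => δ ^ α) (𝓝[>] 0) (𝓝 0) := by
      simpa [zero_rpow hα0.ne'] using
        (continuousAt_rpow_const 0 α (Or.inr hα0.le)).tendsto.mono_left nhdsWithin_le_nhds
    exact ((((eventually_lt_nhds ht₀).filter_mono nhdsWithin_le_nhds).and
      (hlim.eventually (gt_mem_nhds hΓ))).and self_mem_nhdsWithin).exists
  obtain ⟨r, hr, hmax⟩ := isCompact_Icc.exists_isMaxOn (nonempty_Icc.2 (by linarith))
    (hu.mono fun s (hs : s ∈ Icc (t₀ - δ) t₀) => show 0 ≤ s by linarith [hs.1])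
  have hr0 : 0 ≤ r := by linarith [hr.1]
  have hur : 0 < u r :=
    (hpos (t₀ - δ) ⟨by linarith, by linarith⟩).trans_le (hmax ⟨le_rfl, by linarith⟩)
  have hrt₀ : r < t₀ := lt_of_le_of_ne hr.2 fun h => by rw [h] at hur; linarith
  have key := riemannLiouville_le_add hα0 hα1 hr0 hr.2 (hu.mono Icc_subset_Ici_self)
    (fun s hs => (hpos s ⟨hs.1, hs.2.trans_lt hrt₀⟩).le)
    (fun s hs => hmax ⟨by linarith [hr.1, hs.1], hs.2⟩)
  have hsmall : u r * (t₀ - r) ^ α / Gamma (α + 1) < u r := by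
    rw [div_lt_iff₀ hΓ]
    calc u r * (t₀ - r) ^ α ≤ u r * δ ^ α := by
          gcongr
          all_goals linarith [hr.1]
      _ < u r * Gamma (α + 1) := by gcongr
  linarith [heq r hr0, heq t₀ ht₀.le]

lemma one_le_mittagLeffler {α x : ℝ} (hα : 0 < α) (hx : 0 ≤ x) : 1 ≤ mittagLeffler α x := by
  simpa using le_hasSum (hasSum_mittagLeffler hα x) 0 fun k _ => by positivity

lemma mittagLeffler_neg_rpow_pos {α t : ℝ} (hα0 : 0 < α) (hα1 : α ≤ 1) (ht : 0 ≤ t) :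
    0 < mittagLeffler α (-t ^ α) :=
  pos_of_eq_one_sub_riemannLiouville (u := fun s => mittagLeffler α (-s ^ α)) hα0 hα1
    (continuousOn_mittagLeffler_neg_rpow hα0)
    (fun _ hs => mittagLeffler_neg_rpow_eq_one_sub_riemannLiouville hα0 hs) ht

/-- For every real α with 0 < α ≤ 1 and every real x, E_α(x) > 0. -/
theorem mittagLeffler_pos (α : ℝ) (hα0 : 0 < α) (hα1 : α ≤ 1) (x : ℝ) :
    0 < mittagLeffler α x := by
  rcases le_or_gt 0 x with hx | hx
  · exact one_pos.trans_le (one_le_mittagLeffler hα0 hx)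
  · have h := mittagLeffler_neg_rpow_pos hα0 hα1 (t := (-x) ^ α⁻¹) (rpow_nonneg (by linarith) _)
    rwa [rpow_inv_rpow (by linarith) hα0.ne', neg_neg] at h
end
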